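/- The meet operator ⊓ on the symbolic lattice L is idempotent, commutative, and associative: for all l, l₁, l₂, l₃ ∈ L, l ⊓ l = l, l₁ ⊓ l₂ = l₂ ⊓ l₁, and (l₁ ⊓ l₂) ⊓ l₃ = l₁ ⊓ (l₂ ⊓ l₃). -/

import Mathlib

inductive SymExpr (P U B F : Type*) where
  | bot : SymExpr P U B F
  | top : SymExpr P U B F
  | prim : P → SymExpr P U B F
  | unop : U → SymExpr P U B F → SymExpr P U B F
  | binop : B → SymExpr P U B F → SymExpr P U B F → SymExpr P U B F
  | fn : F → List (SymExpr P U B F) → SymExpr P U B F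
  | phi : List (SymExpr P U B F) → SymExpr P U B F

namespace SymExpr

variable {P U B F : Type*}

/-- The partial order `⊑` on the symbolic lattice. -/
inductive Le : SymExpr P U B F → SymExpr P U B F → Prop where
  | bot (l) : Le .bot l
  | top (l) : Le l .top
  | prim (p : P) : Le (.prim p) (.prim p)
  | unop {l l'} (u : U) : Le l l' → Le (.unop u l) (.unop u l')
  | binop {l₁ l₂ l₁' l₂'} (b : B) : Le l₁ l₁' → Le l₂ l₂' →
      Le (.binop b l₁ l₂) (.binop b l₁' l₂')
  | fn {ls ls'} (f : F) : List.Forall₂ Le ls ls' → Le (.fn f ls) (.fn f ls')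
  | phi {ls ls'} : List.Forall₂ Le ls ls' → Le (.phi ls) (.phi ls')

attribute [local instance] Classical.propDecidable

mutual
noncomputable def join : SymExpr P U B F → SymExpr P U B F → SymExpr P U B F
  | .bot, l => l
  | l, .bot => l
  | .prim p, .prim p' => if p = p' then .prim p else .top
  | .unop u l, .unop u' l' => if u = u' then .unop u (join l l') else .top
  | .binop b l₁ l₂, .binop b' l₁' l₂' =>
      if b = b' then .binop b (join l₁ l₁') (join l₂ l₂') else .top
  | .fn f ls, .fn f' ls' =>
      if f = f' ∧ ls.length = ls'.length then .fn f (joinList ls ls') else .top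
  | .phi ls, .phi ls' =>
      if ls.length = ls'.length then .phi (joinList ls ls') else .top
  | _, _ => .top

noncomputable def joinList : List (SymExpr P U B F) → List (SymExpr P U B F) → List (SymExpr P U B F)
  | l :: ls, l' :: ls' => join l l' :: joinList ls ls'
  | _, _ => []
end

mutual
noncomputable def meet : SymExpr P U B F → SymExpr P U B F → SymExpr P U B F
  | .top, l => l
  | l, .top => l
  | .prim p, .prim p' => if p = p' then .prim p else .bot
  | .unop u l, .unop u' l' => if u = u' then .unop u (meet l l') else .bot
  | .binop b l₁ l₂, .binop b' l₁' l₂' =>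
      if b = b' then .binop b (meet l₁ l₁') (meet l₂ l₂') else .bot
  | .fn f ls, .fn f' ls' =>
      if f = f' ∧ ls.length = ls'.length then .fn f (meetList ls ls') else .bot
  | .phi ls, .phi ls' =>
      if ls.length = ls'.length then .phi (meetList ls ls') else .bot
  | _, _ => .bot

noncomputable def meetList : List (SymExpr P U B F) → List (SymExpr P U B F) → List (SymExpr P U B F)
  | l :: ls, l' :: ls' => meet l l' :: meetList ls ls'
  | _, _ => []
end

mutual
def depth : SymExpr P U B F → ℕ
  | .bot => 0
  | .top => 0
  | .prim _ => 0
  | .unop _ l => 1 + depth l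
  | .binop _ l₁ l₂ => 1 + max (depth l₁) (depth l₂)
  | .fn _ ls => 1 + depthList ls
  | .phi ls => 1 + depthList ls

def depthList : List (SymExpr P U B F) → ℕ
  | [] => 0
  | l :: ls => max (depth l) (depthList ls)
end

/-- The widening truncation `T_i`. -/
def trunc : ℕ → SymExpr P U B F → SymExpr P U B F
  | _, .bot => .bot
  | _, .top => .top
  | _, .prim p => .prim p
  | 0, .unop _ _ => .top
  | 0, .binop _ _ _ => .top
  | 0, .fn _ _ => .top
  | 0, .phi _ => .top
  | i + 1, .unop u l => .unop u (trunc i l)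
  | i + 1, .binop b l₁ l₂ => .binop b (trunc i l₁) (trunc i l₂)
  | i + 1, .fn f ls => .fn f (ls.map (fun l => trunc i l))
  | i + 1, .phi ls => .phi (ls.map (fun l => trunc i l))

end SymExpr

/-! Each identity is proved by structural induction on the first argument, simultaneously with
its componentwise version for `meetList`, after splitting the other arguments by their outer
constructor: `⊤` is the unit and `⊥` the absorbing element, two different outer constructors meet
to `⊥` on both sides, and for `fn` and `phi` the length guards agree on both sides because
`meetList` truncates to the shorter list. -/

namespace SymExpr

variable {P U B F : Type*}

@[simp] theorem top_meet (l : SymExpr P U B F) : top.meet l = l := by cases l <;> simp [meet]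

@[simp] theorem meet_top (l : SymExpr P U B F) : l.meet top = l := by cases l <;> simp [meet]

@[simp] theorem bot_meet (l : SymExpr P U B F) : bot.meet l = bot := by cases l <;> simp [meet]

@[simp] theorem meet_bot (l : SymExpr P U B F) : l.meet bot = bot := by cases l <;> simp [meet]

theorem length_meetList : ∀ ls ls' : List (SymExpr P U B F),
    (meetList ls ls').length = min ls.length ls'.length
  | [], _ | _ :: _, [] => by simp [meetList]
  | _ :: ls, _ :: ls' => by simp [meetList, length_meetList ls ls', Nat.succ_min_succ]

mutual

theorem meet_self : ∀ l : SymExpr P U B F, l.meet l = l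
  | bot | top | prim _ => by simp [meet]
  | unop _ l => by simp [meet, meet_self l]
  | binop _ l₁ l₂ => by simp [meet, meet_self l₁, meet_self l₂]
  | fn _ ls | phi ls => by simp [meet, meetList_self ls]

theorem meetList_self : ∀ ls : List (SymExpr P U B F), meetList ls ls = ls
  | [] => by simp [meetList]
  | l :: ls => by simp [meetList, meet_self l, meetList_self ls]

end

mutual

theorem meet_comm : ∀ l₁ l₂ : SymExpr P U B F, l₁.meet l₂ = l₂.meet l₁
  | bot, _ | top, _ => by simp
  | prim _, l => by cases l <;> grind [meet]
  | unop _ l, l' => by cases l' <;> grind [meet, meet_comm l]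
  | binop _ l₁ l₂, l' => by cases l' <;> grind [meet, meet_comm l₁, meet_comm l₂]
  | fn _ ls, l' | phi ls, l' => by cases l' <;> grind [meet, meetList_comm ls]

theorem meetList_comm : ∀ ls ls' : List (SymExpr P U B F), meetList ls ls' = meetList ls' ls
  | [], [] | [], _ :: _ | _ :: _, [] => by simp [meetList]
  | l :: ls, l' :: ls' => by simp [meetList, meet_comm l l', meetList_comm ls ls']

end

mutual

theorem meet_assoc : ∀ l₁ l₂ l₃ : SymExpr P U B F, (l₁.meet l₂).meet l₃ = l₁.meet (l₂.meet l₃)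
  | bot, _, _ | top, _, _ => by simp
  | prim _, l₂, l₃ => by cases l₂ <;> cases l₃ <;> grind [meet]
  | unop _ l, l₂, l₃ => by cases l₂ <;> cases l₃ <;> grind [meet, meet_assoc l]
  | binop _ l l', l₂, l₃ => by
      cases l₂ <;> cases l₃ <;> grind [meet, meet_assoc l, meet_assoc l']
  | fn _ ls, l₂, l₃ | phi ls, l₂, l₃ => by
      cases l₂ <;> cases l₃ <;> grind [meet, meetList_assoc ls, length_meetList]

theorem meetList_assoc : ∀ ls₁ ls₂ ls₃ : List (SymExpr P U B F),
    meetList (meetList ls₁ ls₂) ls₃ = meetList ls₁ (meetList ls₂ ls₃)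
  | [], _, _ | _ :: _, [], _ | _ :: _, _ :: _, [] => by simp [meetList]
  | l₁ :: ls₁, l₂ :: ls₂, l₃ :: ls₃ => by simp [meetList, meet_assoc l₁, meetList_assoc ls₁]

end

end SymExpr

/-- the meet is idempotent, commutative and associative. -/
theorem SymExpr.meet_idem_comm_assoc {P U B F : Type*} :
    (∀ l : SymExpr P U B F, l.meet l = l) ∧
    (∀ l₁ l₂ : SymExpr P U B F, l₁.meet l₂ = l₂.meet l₁) ∧
    (∀ l₁ l₂ l₃ : SymExpr P U B F, (l₁.meet l₂).meet l₃ = l₁.meet (l₂.meet l₃)) :=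
  ⟨meet_self, meet_comm, meet_assoc⟩
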